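/- For every X in A there exist real numbers A₀ and B₀ with A₀² + B₀² = a(X) and 2·A₀·B₀ = b(X); equivalently, there exists X_d in A supported only on the coordinates 0 and 7 (i.e., X_d = A₀ • e₀ + B₀ • e₇) such that X_d·X_d = X·X*. -/
import Mathlib


noncomputable section

/-- Standard basis vectors of `A := Fin 8 → ℝ`: `e i j = 1` if `i = j`, else `0`. -/
def e (i : Fin 8) : Fin 8 → ℝ := fun j => if i = j then 1 else 0

/-- The octonion-like (split-biquaternion) product on `Fin 8 → ℝ`: the unique bilinear
multiplication determined by the multiplication table on the basis `e 0, …, e 7`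
(with `e 0` the two-sided identity, `e 7 · e 7 = e 0`, `e i · e i = -e 0` for `1 ≤ i ≤ 6`, etc.),
written out in coordinates. -/
def omul (X Y : Fin 8 → ℝ) : Fin 8 → ℝ :=
  ![X 0*Y 0 - X 1*Y 1 - X 2*Y 2 - X 3*Y 3 - X 4*Y 4 - X 5*Y 5 - X 6*Y 6 + X 7*Y 7,
    X 1*Y 0 + X 0*Y 1 - X 3*Y 2 + X 2*Y 3 + X 5*Y 4 - X 4*Y 5 - X 7*Y 6 - X 6*Y 7,
    X 2*Y 0 + X 3*Y 1 + X 0*Y 2 - X 1*Y 3 - X 6*Y 4 - X 7*Y 5 + X 4*Y 6 - X 5*Y 7,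
    X 3*Y 0 - X 2*Y 1 + X 1*Y 2 + X 0*Y 3 - X 7*Y 4 + X 6*Y 5 - X 5*Y 6 - X 4*Y 7,
    X 4*Y 0 - X 5*Y 1 + X 6*Y 2 - X 7*Y 3 + X 0*Y 4 + X 1*Y 5 - X 2*Y 6 - X 3*Y 7,
    X 5*Y 0 + X 4*Y 1 - X 7*Y 2 - X 6*Y 3 - X 1*Y 4 + X 0*Y 5 + X 3*Y 6 - X 2*Y 7,
    X 6*Y 0 - X 7*Y 1 - X 4*Y 2 + X 5*Y 3 + X 2*Y 4 - X 3*Y 5 + X 0*Y 6 - X 1*Y 7,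
    X 7*Y 0 + X 6*Y 1 + X 5*Y 2 + X 4*Y 3 + X 3*Y 4 + X 2*Y 5 + X 1*Y 6 + X 0*Y 7]

/-- The conjugate (reverse) of `X`: negate the six imaginary coordinates `1,…,6`. -/
def oconj (X : Fin 8 → ℝ) : Fin 8 → ℝ :=
  ![X 0, -X 1, -X 2, -X 3, -X 4, -X 5, -X 6, X 7]

/-- `a(X) = ∑ i, (X i)²`. -/
def aQ (X : Fin 8 → ℝ) : ℝ := ∑ i, (X i)^2

/-- `b(X) = 2 X₀X₇ − 2 (X₁X₆ + X₂X₅ + X₃X₄)`. -/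
def bQ (X : Fin 8 → ℝ) : ℝ := 2*(X 0)*(X 7) - 2*((X 1)*(X 6) + (X 2)*(X 5) + (X 3)*(X 4))

/-- Squared seminorm `N_λ(X) = a(X) + λ·b(X)` (used with `λ = 1` and `λ = -1`). -/
def Nsq (lam : ℝ) (X : Fin 8 → ℝ) : ℝ := aQ X + lam * bQ X

/-- Matrix of left multiplication by `X`: column `j` is the coordinate vector of `X · eⱼ`. -/
def MX (X : Fin 8 → ℝ) : Matrix (Fin 8) (Fin 8) ℝ := Matrix.of fun i j => omul X (e j) i

/-- Matrix of right multiplication by `X`: column `j` is the coordinate vector of `eⱼ · X`. -/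
def PX (X : Fin 8 → ℝ) : Matrix (Fin 8) (Fin 8) ℝ := Matrix.of fun i j => omul (e j) X i

/-- The matrix `J` with `J 0 7 = J 7 0 = 1`, `J i (7-i) = -1` for `1 ≤ i ≤ 6`, else `0`. -/
def J : Matrix (Fin 8) (Fin 8) ℝ :=
  !![0, 0, 0, 0, 0, 0, 0, 1;
     0, 0, 0, 0, 0, 0, -1, 0;
     0, 0, 0, 0, 0, -1, 0, 0;
     0, 0, 0, 0, -1, 0, 0, 0;
     0, 0, 0, -1, 0, 0, 0, 0;
     0, 0, -1, 0, 0, 0, 0, 0;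
     0, -1, 0, 0, 0, 0, 0, 0;
     1, 0, 0, 0, 0, 0, 0, 0]

@[simp]
lemma cons_val_five' {α : Type*} {m : ℕ} (x : α) (u : Fin (m+5) → α) :
    Matrix.vecCons x u 5 = Matrix.vecHead (Matrix.vecTail (Matrix.vecTail (Matrix.vecTail (Matrix.vecTail u)))) :=
  rfl

@[simp]
lemma cons_val_six' {α : Type*} {m : ℕ} (x : α) (u : Fin (m+6) → α) :
    Matrix.vecCons x u 6 = Matrix.vecHead (Matrix.vecTail (Matrix.vecTail (Matrix.vecTail (Matrix.vecTail (Matrix.vecTail u))))) :=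
  rfl

@[simp]
lemma cons_val_seven' {α : Type*} {m : ℕ} (x : α) (u : Fin (m+7) → α) :
    Matrix.vecCons x u 7 = Matrix.vecHead (Matrix.vecTail (Matrix.vecTail (Matrix.vecTail (Matrix.vecTail (Matrix.vecTail (Matrix.vecTail u)))))) :=
  rfl

set_option maxHeartbeats 1000000 in
lemma omul_conj (X : Fin 8 → ℝ) :
    omul X (oconj X) = aQ X • e 0 + bQ X • e 7 := by
  funext i
  fin_cases i <;>
    simp [omul, oconj, aQ, bQ, e, Fin.sum_univ_eight, Pi.add_apply,
      Matrix.cons_val_succ] <;> ring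

set_option maxHeartbeats 1000000 in
lemma omul_diag (A₀ B₀ : ℝ) :
    omul (A₀ • e 0 + B₀ • e 7) (A₀ • e 0 + B₀ • e 7)
      = (A₀^2 + B₀^2) • e 0 + (2*A₀*B₀) • e 7 := by
  funext i
  fin_cases i <;>
    simp [omul, e, Pi.add_apply, Pi.smul_apply, smul_eq_mul,
      Matrix.cons_val_succ] <;> ring

/-- There exist reals `A₀, B₀` with `A₀² + B₀² = a(X)`, `2A₀B₀ = b(X)`, and
`X_d := A₀ • e₀ + B₀ • e₇` satisfies `X_d · X_d = X · X*`. -/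
theorem exists_Xd (X : Fin 8 → ℝ) :
    ∃ A₀ B₀ : ℝ, A₀^2 + B₀^2 = aQ X ∧ 2*A₀*B₀ = bQ X ∧
      omul (A₀ • e 0 + B₀ • e 7) (A₀ • e 0 + B₀ • e 7) = omul X (oconj X) := by
  have hp : aQ X + bQ X = (X 0 + X 7)^2 + (X 1 - X 6)^2 + (X 2 - X 5)^2 + (X 3 - X 4)^2 := by
    simp [aQ, bQ, Fin.sum_univ_eight]; ring
  have hm : aQ X - bQ X = (X 0 - X 7)^2 + (X 1 + X 6)^2 + (X 2 + X 5)^2 + (X 3 + X 4)^2 := by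
    simp [aQ, bQ, Fin.sum_univ_eight]; ring
  have hp0 : 0 ≤ aQ X + bQ X := by rw [hp]; positivity
  have hm0 : 0 ≤ aQ X - bQ X := by rw [hm]; positivity
  set s := Real.sqrt (aQ X + bQ X) with hs
  set t := Real.sqrt (aQ X - bQ X) with ht
  have hs2 : s^2 = aQ X + bQ X := Real.sq_sqrt hp0
  have ht2 : t^2 = aQ X - bQ X := Real.sq_sqrt hm0
  have h1 : ((s+t)/2)^2 + ((s-t)/2)^2 = aQ X := by nlinarith [hs2, ht2]
  have h2 : 2*((s+t)/2)*((s-t)/2) = bQ X := by nlinarith [hs2, ht2]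
  exact ⟨(s+t)/2, (s-t)/2, h1, h2, by rw [omul_diag, omul_conj, h1, h2]⟩
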